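/- arXiv:2110.08788 — 5 statements merged into one kernel-verified Lean document; each statement's English description precedes it below -/
import Mathlib

section
/- For every Hurst parameter H in (0,1), the integral ∫₀^∞ ((1+s)^{H-1/2} - s^{H-1/2})² ds + ∫₀^1 s^{2H-1} ds equals Γ(1/2+H)·Γ(2-2H) / (2H·Γ(3/2-H)). -/
open MeasureTheory Real Set Filter Topology

section helpers
variable {a : ℝ}

/-- Mean value theorem helper for `x ^ p` on `[s, 1+s]`. -/
private lemma mvn_mvt (p : ℝ) {s : ℝ} (hs : 0 < s) :
    ∃ c, s < c ∧ c < 1 + s ∧ (1 + s) ^ p - s ^ p = p * c ^ (p - 1) := by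
  obtain ⟨c, hc, hc'⟩ := exists_hasDerivAt_eq_slope (fun x => x ^ p)
    (fun x => p * x ^ (p - 1)) (by linarith : s < 1 + s)
    (fun x hx => (Real.continuousAt_rpow_const x p
      (Or.inl (ne_of_gt (lt_of_lt_of_le hs hx.1)))).continuousWithinAt)
    (fun x hx => Real.hasDerivAt_rpow_const (Or.inl (ne_of_gt (lt_trans hs hx.1))))
  refine ⟨c, hc.1, hc.2, ?_⟩
  rw [hc']
  field_simp
  ring

private lemma f_abs_bound (ha : a < 1) {s : ℝ} (hs : 0 < s) :
    |(1 + s) ^ a - s ^ a| ≤ |a| * s ^ (a - 1) := by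
  obtain ⟨c, hc1, hc2, hc3⟩ := mvn_mvt a hs
  rw [hc3, abs_mul]
  gcongr
  rw [abs_of_nonneg (Real.rpow_nonneg (by linarith) _)]
  exact Real.rpow_le_rpow_of_nonpos hs hc1.le (by linarith)

private lemma one_add_rpow_le_two (ha : a ≤ 1) {s : ℝ} (h0 : 0 ≤ s) (h1 : s ≤ 1) :
    (1 + s) ^ a ≤ 2 := by
  rcases le_or_gt 0 a with h | h
  · calc (1 + s) ^ a ≤ 2 ^ a := Real.rpow_le_rpow (by linarith) (by linarith) h
    _ ≤ 2 ^ (1:ℝ) := Real.rpow_le_rpow_of_exponent_le one_le_two ha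
    _ = 2 := Real.rpow_one 2
  · exact (Real.rpow_le_one_of_one_le_of_nonpos (by linarith) h.le).trans one_le_two

end helpers

section integrability
variable {a : ℝ}

private lemma contOn_rpow (c : ℝ) : ContinuousOn (fun s : ℝ => s ^ c) (Ioi 0) :=
  fun x hx => (Real.continuousAt_rpow_const x c (Or.inl (ne_of_gt hx))).continuousWithinAt

private lemma contOn_one_add_rpow (c : ℝ) :
    ContinuousOn (fun s : ℝ => (1 + s) ^ c) (Ioi 0) := by
  apply ContinuousOn.rpow_const (by fun_prop)
  intro x hx
  exact Or.inl (by simp only [mem_Ioi] at hx; positivity)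

private lemma int_rpow_Ioc {r : ℝ} (hr : -1 < r) :
    IntegrableOn (fun s : ℝ => s ^ r) (Ioc (0:ℝ) 1) :=
  (intervalIntegrable_iff_integrableOn_Ioc_of_le zero_le_one).mp
    (intervalIntegral.intervalIntegrable_rpow' hr)

private lemma int_two_add_rpow {r : ℝ} (hr : -1 < r) (C : ℝ) :
    IntegrableOn (fun s : ℝ => C + s ^ r) (Ioc (0:ℝ) 1) :=
  (integrableOn_const measure_Ioc_lt_top.ne).add (int_rpow_Ioc hr)

private lemma int_split {f : ℝ → ℝ} (hc : ContinuousOn f (Ioi 0))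
    {r1 r2 C1 C2 : ℝ} (hr1 : -1 < r1) (hr2 : r2 < -1)
    (hb1 : ∀ s : ℝ, 0 < s → s ≤ 1 → |f s| ≤ C1 * (1 + s ^ r1))
    (hb2 : ∀ s : ℝ, 1 < s → |f s| ≤ C2 * s ^ r2) :
    IntegrableOn f (Ioi (0:ℝ)) := by
  rw [← Ioc_union_Ioi_eq_Ioi (zero_le_one (α := ℝ))]
  apply IntegrableOn.union
  · apply Integrable.mono' ((int_two_add_rpow hr1 1).const_mul C1)
      ((hc.mono Ioc_subset_Ioi_self).aestronglyMeasurable measurableSet_Ioc)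
    rw [ae_restrict_iff' measurableSet_Ioc]
    exact ae_of_all _ fun s hs => hb1 s hs.1 hs.2
  · apply Integrable.mono'
      ((integrableOn_Ioi_rpow_of_lt hr2 one_pos).const_mul C2)
      ((hc.mono (Ioi_subset_Ioi zero_le_one)).aestronglyMeasurable measurableSet_Ioi)
    rw [ae_restrict_iff' measurableSet_Ioi]
    exact ae_of_all _ fun s hs => hb2 s hs

private lemma int_fsq (ha1 : -(1/2:ℝ) < a) (ha2 : a < 1/2) :
    IntegrableOn (fun s : ℝ => ((1 + s) ^ a - s ^ a) ^ 2) (Ioi (0:ℝ)) := by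
  apply int_split (((contOn_one_add_rpow a).sub (contOn_rpow a)).pow 2)
    (r1 := 2*a) (r2 := 2*a - 2) (C1 := 8) (C2 := a^2) (by linarith) (by linarith)
  · intro s hs0 hs1
    simp only [Pi.sub_apply, Pi.pow_apply, Pi.mul_apply]
    have hX : (0:ℝ) ≤ s ^ a := Real.rpow_nonneg hs0.le a
    have hB0 : (0:ℝ) ≤ (1+s) ^ a := Real.rpow_nonneg (by linarith) a
    have hB2 : (1+s) ^ a ≤ 2 := one_add_rpow_le_two (by linarith) hs0.le hs1
    have h2a : s ^ (2*a) = s ^ a * s ^ a := by rw [two_mul, Real.rpow_add hs0]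
    rw [abs_of_nonneg (sq_nonneg _), h2a]
    nlinarith [sq_nonneg ((1+s)^a - s^a), sq_nonneg (s^a)]
  · intro s hs
    simp only [Pi.sub_apply, Pi.pow_apply, Pi.mul_apply]
    have hs0 : (0:ℝ) < s := by linarith
    have hb := f_abs_bound (a := a) (by linarith) hs0
    have h2a : s ^ (2*a-2) = s ^ (a-1) * s ^ (a-1) := by
      rw [show (2*a-2) = (a-1)+(a-1) by ring, Real.rpow_add hs0]
    have hX : (0:ℝ) ≤ s ^ (a-1) := Real.rpow_nonneg hs0.le _
    rw [abs_of_nonneg (sq_nonneg _), h2a]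
    have hmul := mul_self_le_mul_self (abs_nonneg _) hb
    nlinarith [sq_abs ((1+s)^a - s^a), sq_abs a]

private lemma int_h (ha1 : -(1/2:ℝ) < a) (ha2 : a < 1/2) :
    IntegrableOn (fun s : ℝ => (1 + s) ^ (a-1) * (s ^ a - (1 + s) ^ a)) (Ioi (0:ℝ)) := by
  apply int_split ((contOn_one_add_rpow (a-1)).mul ((contOn_rpow a).sub (contOn_one_add_rpow a)))
    (r1 := a) (r2 := 2*a - 2) (C1 := 2) (C2 := |a|) (by linarith) (by linarith)
  · intro s hs0 hs1
    simp only [Pi.sub_apply, Pi.pow_apply, Pi.mul_apply]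
    have hX : (0:ℝ) ≤ s ^ a := Real.rpow_nonneg hs0.le a
    have hB2 : (1+s) ^ a ≤ 2 := one_add_rpow_le_two (by linarith) hs0.le hs1
    have hB0 : (0:ℝ) ≤ (1+s) ^ a := Real.rpow_nonneg (by linarith) a
    have hP1 : (1+s) ^ (a-1) ≤ 1 :=
      Real.rpow_le_one_of_one_le_of_nonpos (by linarith) (by linarith)
    have hP0 : (0:ℝ) ≤ (1+s) ^ (a-1) := Real.rpow_nonneg (by linarith) _
    rw [abs_mul]
    have habs : |s ^ a - (1 + s) ^ a| ≤ 2 + s ^ a := by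
      rw [abs_sub_comm]
      calc |(1+s) ^ a - s ^ a| ≤ |(1+s) ^ a| + |s ^ a| := abs_sub _ _
        _ ≤ 2 + s ^ a := by rw [abs_of_nonneg hB0, abs_of_nonneg hX]; linarith
    calc |(1+s) ^ (a-1)| * |s ^ a - (1+s) ^ a| ≤ 1 * (2 + s ^ a) := by
          apply mul_le_mul (by rwa [abs_of_nonneg hP0]) habs (abs_nonneg _) zero_le_one
      _ ≤ 2 * (1 + s ^ a) := by linarith
  · intro s hs
    simp only [Pi.sub_apply, Pi.pow_apply, Pi.mul_apply]
    have hs0 : (0:ℝ) < s := by linarith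
    have hb : |s ^ a - (1 + s) ^ a| ≤ |a| * s ^ (a-1) := by
      rw [abs_sub_comm]; exact f_abs_bound (a := a) (by linarith) hs0
    have hP1 : (1+s) ^ (a-1) ≤ s ^ (a-1) :=
      Real.rpow_le_rpow_of_nonpos hs0 (by linarith) (by linarith)
    have hP0 : (0:ℝ) ≤ (1+s) ^ (a-1) := Real.rpow_nonneg (by linarith) _
    have hX : (0:ℝ) ≤ s ^ (a-1) := Real.rpow_nonneg hs0.le _
    have h2a : s ^ (2*a-2) = s ^ (a-1) * s ^ (a-1) := by
      rw [show (2*a-2) = (a-1)+(a-1) by ring, Real.rpow_add hs0]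
    rw [abs_mul, abs_of_nonneg hP0, h2a]
    calc (1+s) ^ (a-1) * |s ^ a - (1+s) ^ a| ≤ s ^ (a-1) * (|a| * s ^ (a-1)) :=
          mul_le_mul hP1 hb (abs_nonneg _) hX
      _ = |a| * (s ^ (a-1) * s ^ (a-1)) := by ring

private lemma int_c (ha1 : -(1/2:ℝ) < a) (ha2 : a < 1/2) :
    IntegrableOn (fun s : ℝ => s ^ a * (1 + s) ^ (a-2)) (Ioi (0:ℝ)) := by
  apply int_split ((contOn_rpow a).mul (contOn_one_add_rpow (a-2)))
    (r1 := a) (r2 := 2*a - 2) (C1 := 1) (C2 := 1) (by linarith) (by linarith)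
  · intro s hs0 hs1
    simp only [Pi.sub_apply, Pi.pow_apply, Pi.mul_apply]
    have hX : (0:ℝ) ≤ s ^ a := Real.rpow_nonneg hs0.le a
    have hP1 : (1+s) ^ (a-2) ≤ 1 :=
      Real.rpow_le_one_of_one_le_of_nonpos (by linarith) (by linarith)
    have hP0 : (0:ℝ) ≤ (1+s) ^ (a-2) := Real.rpow_nonneg (by linarith) _
    rw [abs_mul, abs_of_nonneg hX, abs_of_nonneg hP0, one_mul]
    nlinarith
  · intro s hs
    simp only [Pi.sub_apply, Pi.pow_apply, Pi.mul_apply]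
    have hs0 : (0:ℝ) < s := by linarith
    have hP1 : (1+s) ^ (a-2) ≤ s ^ (a-2) :=
      Real.rpow_le_rpow_of_nonpos hs0 (by linarith) (by linarith)
    have hP0 : (0:ℝ) ≤ (1+s) ^ (a-2) := Real.rpow_nonneg (by linarith) _
    have hX : (0:ℝ) ≤ s ^ a := Real.rpow_nonneg hs0.le _
    have h2a : s ^ (2*a-2) = s ^ a * s ^ (a-2) := by
      rw [show (2*a-2) = a+(a-2) by ring, Real.rpow_add hs0]
    rw [abs_mul, abs_of_nonneg hX, abs_of_nonneg hP0, h2a, one_mul]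
    exact mul_le_mul_of_nonneg_left hP1 hX

end integrability

private lemma real_beta {u v : ℝ} (hu : 0 < u) (hv : 0 < v) :
    ∫ t in (0:ℝ)..1, t ^ (u-1) * (1-t) ^ (v-1) = Gamma u * Gamma v / Gamma (u+v) := by
  have key := Complex.Gamma_mul_Gamma_eq_betaIntegral (s := (u:ℂ)) (t := (v:ℂ))
    (by simpa using hu) (by simpa using hv)
  rw [Complex.betaIntegral] at key
  have h2 : (∫ x : ℝ in (0:ℝ)..1, (x:ℂ) ^ ((u:ℂ) - 1) * (1 - (x:ℂ)) ^ ((v:ℂ) - 1))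
      = ((∫ t in (0:ℝ)..1, t ^ (u-1) * (1-t) ^ (v-1) : ℝ) : ℂ) := by
    rw [← intervalIntegral.integral_ofReal]
    apply intervalIntegral.integral_congr
    intro x hx
    rw [uIcc_of_le zero_le_one] at hx
    simp only []
    rw [Complex.ofReal_mul, Complex.ofReal_cpow hx.1 (u-1),
      Complex.ofReal_cpow (show (0:ℝ) ≤ 1-x by linarith [hx.2]) (v-1)]
    push_cast
    ring
  rw [h2, ← Complex.ofReal_add, Complex.Gamma_ofReal, Complex.Gamma_ofReal,
    Complex.Gamma_ofReal, ← Complex.ofReal_mul, ← Complex.ofReal_mul] at key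
  have := Complex.ofReal_injective key
  have hG : Gamma (u+v) ≠ 0 := (Gamma_pos_of_pos (by linarith)).ne'
  field_simp
  linarith [this]

private lemma int_c_val {a : ℝ} (ha1 : -(1/2:ℝ) < a) (ha2 : a < 1/2) :
    ∫ s in Ioi (0:ℝ), s ^ a * (1 + s) ^ (a-2)
      = Gamma (a+1) * Gamma (1-2*a) / Gamma (2-a) := by
  have himg : (fun t : ℝ => t / (1-t)) '' (Ioo 0 1) = Ioi (0:ℝ) := by
    ext y
    simp only [mem_image, mem_Ioo, mem_Ioi]
    constructor
    · rintro ⟨t, ⟨h0, h1⟩, rfl⟩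
      exact div_pos h0 (by linarith)
    · intro hy
      refine ⟨y / (1+y), ⟨by positivity, by rw [div_lt_one (by linarith)]; linarith⟩, ?_⟩
      have h1 : 1 - y/(1+y) = 1/(1+y) := by field_simp; ring
      rw [h1]
      field_simp
  have hderiv : ∀ t ∈ Ioo (0:ℝ) 1, HasDerivWithinAt (fun t : ℝ => t / (1-t))
      (((1-t) ^ 2)⁻¹) (Ioo 0 1) t := by
    intro t ht
    have hne : (1:ℝ) - t ≠ 0 := by rcases ht with ⟨h0, h1⟩; intro h; linarith [h]
    have := (hasDerivAt_id t).div ((hasDerivAt_const t 1).sub (hasDerivAt_id t)) hne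
    refine this.hasDerivWithinAt.congr_deriv ?_; symm
    simp only [Pi.sub_apply, id_eq]
    field_simp
    ring
  have hinj : InjOn (fun t : ℝ => t / (1-t)) (Ioo 0 1) := by
    intro x hx y hy hxy
    simp only at hxy
    have hx1 : (1:ℝ) - x ≠ 0 := by rcases hx with ⟨_, h⟩; intro h'; linarith
    have hy1 : (1:ℝ) - y ≠ 0 := by rcases hy with ⟨_, h⟩; intro h'; linarith
    field_simp at hxy
    linarith
  have key := integral_image_eq_integral_abs_deriv_smul measurableSet_Ioo hderiv hinj
    (fun s : ℝ => s ^ a * (1 + s) ^ (a-2))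
  rw [himg] at key
  rw [key]
  have hcong : ∀ t ∈ Ioo (0:ℝ) 1,
      |((1-t) ^ 2)⁻¹| • ((t/(1-t)) ^ a * (1 + t/(1-t)) ^ (a-2))
        = t ^ ((a+1)-1) * (1-t) ^ ((1-2*a)-1) := by
    intro t ht
    rcases ht with ⟨h0, h1⟩
    have h1t : (0:ℝ) < 1 - t := by linarith
    have e0 : 1 + t/(1-t) = (1-t)⁻¹ := by field_simp; ring
    have e1 : (t/(1-t)) ^ a = t ^ a * ((1-t) ^ a)⁻¹ := by
      rw [Real.div_rpow h0.le h1t.le, div_eq_mul_inv]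
    have h2 : ((1-t)^2 : ℝ) = (1-t) ^ (2:ℝ) := by
      rw [← Real.rpow_natCast (1-t) 2]; norm_num
    rw [smul_eq_mul, abs_of_nonneg (by positivity), e0, e1, Real.inv_rpow h1t.le, h2,
      ← Real.rpow_neg h1t.le 2, ← Real.rpow_neg h1t.le a, ← Real.rpow_neg h1t.le (a-2),
      show ((a+1)-1:ℝ) = a by ring, show ((1-2*a)-1:ℝ) = -2*a by ring,
      show (-2*a : ℝ) = (-2) + (-a + -(a-2)) by ring, Real.rpow_add h1t,
      Real.rpow_add h1t]
    ring
  rw [setIntegral_congr_fun measurableSet_Ioo hcong, ← integral_Ioc_eq_integral_Ioo,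
    ← intervalIntegral.integral_of_le zero_le_one,
    real_beta (by linarith) (by linarith), show a+1+(1-2*a) = 2-a by ring]

private lemma stepA {a : ℝ} (ha1 : -(1/2:ℝ) < a) (ha2 : a < 1/2) :
    ∫ s in Ioi (0:ℝ), ((1+2*a) * ((1 + s) ^ a - s ^ a) ^ 2
      + 2*a * ((1 + s) ^ (a-1) * (s ^ a - (1 + s) ^ a))) = 0 := by
  have hint : IntegrableOn (fun s : ℝ => (1+2*a) * ((1 + s) ^ a - s ^ a) ^ 2
      + 2*a * ((1 + s) ^ (a-1) * (s ^ a - (1 + s) ^ a))) (Ioi (0:ℝ)) :=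
    ((int_fsq ha1 ha2).const_mul _).add ((int_h ha1 ha2).const_mul _)
  have hderiv : ∀ x ∈ Ioi (0:ℝ), HasDerivAt (fun s : ℝ => s * ((1 + s) ^ a - s ^ a) ^ 2)
      ((1+2*a) * ((1 + x) ^ a - x ^ a) ^ 2
        + 2*a * ((1 + x) ^ (a-1) * (x ^ a - (1 + x) ^ a))) x := by
    intro x hx
    have hx0 : (0:ℝ) < x := hx
    have hx1 : (0:ℝ) < 1 + x := by linarith
    have d1 : HasDerivAt (fun s : ℝ => (1 + s) ^ a) (a * (1+x) ^ (a-1)) x := by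
      have := (((hasDerivAt_id x).const_add 1).rpow_const (p := a) (Or.inl hx1.ne'))
      simpa using this
    have d2 : HasDerivAt (fun s : ℝ => s ^ a) (a * x ^ (a-1)) x :=
      Real.hasDerivAt_rpow_const (Or.inl hx0.ne')
    have d4 := (hasDerivAt_id x).mul ((d1.sub d2).pow 2)
    refine d4.congr_deriv ?_; symm
    simp only [Pi.sub_apply, Pi.pow_apply, id_eq]
    push_cast
    have eP : (1+x) ^ a = (1+x) ^ (a-1) * (1+x) := by
      rw [← Real.rpow_add_one hx1.ne' (a-1)]; ring_nf
    have eQ : x ^ a = x ^ (a-1) * x := by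
      rw [← Real.rpow_add_one hx0.ne' (a-1)]; ring_nf
    rw [eP, eQ]
    ring
  have hcont : ContinuousWithinAt (fun s : ℝ => s * ((1 + s) ^ a - s ^ a) ^ 2) (Ici 0) 0 := by
    rw [← continuousWithinAt_Ioi_iff_Ici]
    have h0 : (fun s : ℝ => s * ((1+s) ^ a - s ^ a) ^ 2) 0 = 0 := by simp
    have htend : Tendsto (fun s : ℝ => s * ((1+s) ^ a - s ^ a) ^ 2) (𝓝[>] 0) (𝓝 0) := by
      apply squeeze_zero' (g := fun s : ℝ => 8*s + 8*s ^ (1+2*a))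
      · filter_upwards [self_mem_nhdsWithin] with s hs
        have : (0:ℝ) < s := hs
        positivity
      · filter_upwards [Ioo_mem_nhdsGT_of_mem (show (0:ℝ) ∈ Ico (0:ℝ) 1 by simp)]
          with s hs
        rcases hs with ⟨hs0, hs1⟩
        have hX : (0:ℝ) ≤ s ^ a := Real.rpow_nonneg hs0.le a
        have hB0 : (0:ℝ) ≤ (1+s) ^ a := Real.rpow_nonneg (by linarith) a
        have hB2 : (1+s) ^ a ≤ 2 := one_add_rpow_le_two (by linarith) hs0.le hs1.le
        have h2a : s ^ (1+2*a) = s * (s ^ a * s ^ a) := by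
          rw [show (1+2*a) = 1+(a+a) by ring, Real.rpow_add hs0, Real.rpow_add hs0,
            Real.rpow_one]
        rw [h2a]
        have hF2 : ((1+s) ^ a - s ^ a) ^ 2 ≤ 8 + 8*(s ^ a * s ^ a) := by
          nlinarith [mul_nonneg hB0 hX, sq_nonneg (s ^ a)]
        nlinarith [mul_le_mul_of_nonneg_left hF2 hs0.le]
      · have c1 : Tendsto (fun s : ℝ => 8*s + 8*s ^ (1+2*a)) (𝓝 0) (𝓝 (8*0 + 8*(0:ℝ) ^ (1+2*a))) := by
          apply Tendsto.add
          · exact (continuous_const.mul continuous_id).tendsto 0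
          · exact ((Real.continuousAt_rpow_const 0 (1+2*a) (Or.inr (by linarith))).const_mul 8)
        rw [Real.zero_rpow (by linarith : (1:ℝ)+2*a ≠ 0)] at c1
        simpa using c1.mono_left nhdsWithin_le_nhds
    simpa [ContinuousWithinAt, h0] using htend
  have htop : Tendsto (fun s : ℝ => s * ((1 + s) ^ a - s ^ a) ^ 2) atTop (𝓝 0) := by
    apply squeeze_zero' (g := fun s : ℝ => a^2 * s ^ (2*a-1))
    · filter_upwards [Ioi_mem_atTop (0:ℝ)] with s hs
      have : (0:ℝ) < s := hs
      positivity
    · filter_upwards [Ioi_mem_atTop (1:ℝ)] with s hs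
      have hs1 : (1:ℝ) < s := mem_Ioi.mp hs
      have hs0 : (0:ℝ) < s := by linarith
      have hb := f_abs_bound (a := a) (by linarith) hs0
      have hmul := mul_self_le_mul_self (abs_nonneg ((1+s) ^ a - s ^ a)) hb
      have h2a : s ^ (2*a-1) = s * (s ^ (a-1) * s ^ (a-1)) := by
        rw [show (2*a-1) = 1+((a-1)+(a-1)) by ring, Real.rpow_add hs0, Real.rpow_add hs0,
          Real.rpow_one]
      rw [h2a]
      have hF2 : ((1+s) ^ a - s ^ a) ^ 2 ≤ a^2 * (s ^ (a-1) * s ^ (a-1)) := by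
        nlinarith [sq_abs ((1+s) ^ a - s ^ a), sq_abs a]
      nlinarith [mul_le_mul_of_nonneg_left hF2 hs0.le]
    · have := (tendsto_rpow_neg_atTop (by linarith : (0:ℝ) < 1-2*a)).const_mul (a^2)
      simpa [show -(1-2*a) = 2*a-1 by ring] using this
  have key := MeasureTheory.integral_Ioi_of_hasDerivAt_of_tendsto hcont hderiv hint htop
  simp at key
  convert key using 2

private lemma stepB {a : ℝ} (ha1 : -(1/2:ℝ) < a) (ha2 : a < 1/2) :
    ∫ s in Ioi (0:ℝ), (-(2*a) * ((1 + s) ^ (a-1) * (s ^ a - (1 + s) ^ a))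
      - (1-a) * (s ^ a * (1 + s) ^ (a-2))) = -1 := by
  set G : ℝ → ℝ := fun s => (1+s) ^ (2*a) - s ^ (a+1) * (1+s) ^ (a-1) with hG
  have hint : IntegrableOn (fun s : ℝ => -(2*a) * ((1 + s) ^ (a-1) * (s ^ a - (1 + s) ^ a))
      - (1-a) * (s ^ a * (1 + s) ^ (a-2))) (Ioi (0:ℝ)) :=
    ((int_h ha1 ha2).const_mul _).sub ((int_c ha1 ha2).const_mul _)
  have hderiv : ∀ x ∈ Ioi (0:ℝ), HasDerivAt G
      (-(2*a) * ((1 + x) ^ (a-1) * (x ^ a - (1 + x) ^ a))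
        - (1-a) * (x ^ a * (1 + x) ^ (a-2))) x := by
    intro x hx
    have hx0 : (0:ℝ) < x := hx
    have hx1 : (0:ℝ) < 1 + x := by linarith
    have d1 : HasDerivAt (fun s : ℝ => (1 + s) ^ (2*a)) (2*a * (1+x) ^ (2*a-1)) x := by
      have := (((hasDerivAt_id x).const_add 1).rpow_const (p := 2*a) (Or.inl hx1.ne'))
      simpa using this
    have d2 : HasDerivAt (fun s : ℝ => s ^ (a+1)) ((a+1) * x ^ (a+1-1)) x :=
      Real.hasDerivAt_rpow_const (Or.inl hx0.ne')
    have d3 : HasDerivAt (fun s : ℝ => (1 + s) ^ (a-1)) ((a-1) * (1+x) ^ (a-1-1)) x := by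
      have := (((hasDerivAt_id x).const_add 1).rpow_const (p := a-1) (Or.inl hx1.ne'))
      simpa using this
    have d5 := d1.sub (d2.mul d3)
    refine d5.congr_deriv ?_; symm
    have h3 : (1+x) ^ (a+1) = (1+x) ^ (a-2) * (1+x) * (1+x) * (1+x) := by
      rw [show a+1 = (a-2)+1+1+1 by ring, Real.rpow_add_one hx1.ne',
        Real.rpow_add_one hx1.ne', Real.rpow_add_one hx1.ne']
    have eP2 : (1+x) ^ (2*a-1) = (1+x) ^ (a-2) * ((1+x) ^ (a-2) * (1+x) * (1+x) * (1+x)) := by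
      rw [show 2*a-1 = (a-2)+(a+1) by ring, Real.rpow_add hx1, h3]
    have eP1 : (1+x) ^ (a-1) = (1+x) ^ (a-2) * (1+x) := by
      rw [← Real.rpow_add_one hx1.ne' (a-2)]; ring_nf
    have eP : (1+x) ^ a = (1+x) ^ (a-2) * (1+x) * (1+x) := by
      rw [← Real.rpow_add_one hx1.ne' (a-2), ← Real.rpow_add_one hx1.ne' (a-2+1)]
      ring_nf
    have eQ : x ^ (a+1) = x ^ a * x := by
      rw [← Real.rpow_add_one hx0.ne' a]
    rw [show a+1-1 = a by ring, show a-1-1 = a-2 by ring] at d5 ⊢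
    rw [eP2, eP1, eP, eQ]
    ring
  have hcont : ContinuousWithinAt G (Ici 0) 0 := by
    apply ContinuousAt.continuousWithinAt
    have c1 : ContinuousAt (fun s : ℝ => (1+s) ^ (2*a)) 0 := by
      apply ContinuousAt.rpow_const (by fun_prop)
      left; norm_num
    have c2 : ContinuousAt (fun s : ℝ => s ^ (a+1)) 0 :=
      Real.continuousAt_rpow_const 0 (a+1) (Or.inr (by linarith))
    have c3 : ContinuousAt (fun s : ℝ => (1+s) ^ (a-1)) 0 := by
      apply ContinuousAt.rpow_const (by fun_prop)
      left; norm_num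
    exact c1.sub (c2.mul c3)
  have hG0 : G 0 = 1 := by
    simp only [hG]
    rw [Real.zero_rpow (by linarith : a+1 ≠ 0)]
    norm_num
  have htop : Tendsto G atTop (𝓝 0) := by
    apply squeeze_zero' (g := fun s : ℝ => (2*(a+1)) * s ^ (2*a-1))
    · filter_upwards [Ioi_mem_atTop (0:ℝ)] with s hs
      have hs0 : (0:ℝ) < s := mem_Ioi.mp hs
      have hs1 : (0:ℝ) < 1 + s := by linarith
      have e1 : (1+s) ^ (2*a) = (1+s) ^ (a+1) * (1+s) ^ (a-1) := by
        rw [← Real.rpow_add hs1]; ring_nf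
      have e2 : s ^ (a+1) ≤ (1+s) ^ (a+1) :=
        Real.rpow_le_rpow hs0.le (by linarith) (by linarith)
      have e3 : (0:ℝ) ≤ (1+s) ^ (a-1) := Real.rpow_nonneg hs1.le _
      simp only [hG]
      rw [e1]
      nlinarith [mul_le_mul_of_nonneg_right e2 e3]
    · filter_upwards [Ioi_mem_atTop (1:ℝ)] with s hs
      have hs1 : (1:ℝ) < s := mem_Ioi.mp hs
      have hs0 : (0:ℝ) < s := by linarith
      have hu1 : (0:ℝ) < 1 + s := by linarith
      obtain ⟨c, hc1, hc2, hc3⟩ := mvn_mvt (a+1) hs0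
      have hca : c ^ (a+1-1) ≤ s ^ a + (1+s) ^ a := by
        rw [show a+1-1 = a by ring]
        rcases le_or_gt 0 a with h | h
        · have : c ^ a ≤ (1+s) ^ a := Real.rpow_le_rpow (by linarith) hc2.le h
          have h0 : (0:ℝ) ≤ s ^ a := Real.rpow_nonneg hs0.le a
          linarith
        · have : c ^ a ≤ s ^ a := Real.rpow_le_rpow_of_nonpos hs0 hc1.le h.le
          have h0 : (0:ℝ) ≤ (1+s) ^ a := Real.rpow_nonneg hu1.le a
          linarith
      have e1 : (1+s) ^ (2*a) = (1+s) ^ (a-1) * (1+s) ^ (a+1) := by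
        rw [← Real.rpow_add hu1]; ring_nf
      have key : G s = (1+s) ^ (a-1) * ((a+1) * c ^ (a+1-1)) := by
        simp only [hG]
        rw [e1, ← hc3]
        ring
      have hP0 : (0:ℝ) ≤ (1+s) ^ (a-1) := Real.rpow_nonneg hu1.le _
      have hP1 : (1+s) ^ (a-1) ≤ s ^ (a-1) :=
        Real.rpow_le_rpow_of_nonpos hs0 (by linarith) (by linarith)
      have e4 : s ^ (a-1) * s ^ a = s ^ (2*a-1) := by
        rw [← Real.rpow_add hs0]; ring_nf
      have t1 : (1+s) ^ (a-1) * s ^ a ≤ s ^ (2*a-1) := by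
        calc (1+s) ^ (a-1) * s ^ a ≤ s ^ (a-1) * s ^ a :=
              mul_le_mul_of_nonneg_right hP1 (Real.rpow_nonneg hs0.le a)
          _ = s ^ (2*a-1) := e4
      have t2 : (1+s) ^ (a-1) * (1+s) ^ a ≤ s ^ (2*a-1) := by
        rw [← Real.rpow_add hu1, show (a-1)+a = 2*a-1 by ring]
        exact Real.rpow_le_rpow_of_nonpos hs0 (by linarith) (by linarith)
      calc G s = (1+s) ^ (a-1) * ((a+1) * c ^ (a+1-1)) := key
        _ ≤ (1+s) ^ (a-1) * ((a+1) * (s ^ a + (1+s) ^ a)) :=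
            mul_le_mul_of_nonneg_left (mul_le_mul_of_nonneg_left hca (by linarith)) hP0
        _ = (a+1) * ((1+s) ^ (a-1) * s ^ a + (1+s) ^ (a-1) * (1+s) ^ a) := by ring
        _ ≤ 2*(a+1) * s ^ (2*a-1) := by nlinarith [t1, t2]
    · have := (tendsto_rpow_neg_atTop (by linarith : (0:ℝ) < 1-2*a)).const_mul (2*(a+1))
      simpa [show -(1-2*a) = 2*a-1 by ring] using this
  have key := MeasureTheory.integral_Ioi_of_hasDerivAt_of_tendsto hcont hderiv hint htop
  rw [hG0] at key
  simpa using key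

/-- The variance normalization constant of Mandelbrot–van Ness fBm:
`∫₀^∞ ((1+s)^{H-1/2} - s^{H-1/2})² ds + ∫₀^1 s^{2H-1} ds
  = Γ(1/2+H)·Γ(2-2H) / (2H·Γ(3/2-H))` for `H ∈ (0,1)`. -/
theorem mvn_variance_constant (H : ℝ) (h1 : 0 < H) (h2 : H < 1) :
    (∫ s in Set.Ioi (0:ℝ), ((1 + s) ^ (H - 1/2) - s ^ (H - 1/2)) ^ 2)
      + (∫ s in (0:ℝ)..1, s ^ (2 * H - 1))
    = Real.Gamma (1/2 + H) * Real.Gamma (2 - 2 * H)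
        / (2 * H * Real.Gamma (3/2 - H)) := by
  set a : ℝ := H - 1/2 with ha
  clear_value a
  have ha1 : -(1/2:ℝ) < a := by rw [ha]; linarith
  have ha2 : a < 1/2 := by rw [ha]; linarith
  have h12a : (0:ℝ) < 1 + 2*a := by rw [ha]; linarith
  set I := ∫ s in Set.Ioi (0:ℝ), ((1 + s) ^ a - s ^ a) ^ 2 with hI
  set J := ∫ s in Set.Ioi (0:ℝ), (1 + s) ^ (a-1) * (s ^ a - (1 + s) ^ a) with hJ
  set C := ∫ s in Set.Ioi (0:ℝ), s ^ a * (1 + s) ^ (a-2) with hC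
  have eA : (1+2*a) * I + 2*a * J = 0 := by
    have := stepA ha1 ha2
    rwa [MeasureTheory.integral_add ((int_fsq ha1 ha2).const_mul _)
        ((int_h ha1 ha2).const_mul _),
      MeasureTheory.integral_const_mul, MeasureTheory.integral_const_mul] at this
  have eB : -(2*a) * J - (1-a) * C = -1 := by
    have := stepB ha1 ha2
    rwa [MeasureTheory.integral_sub ((int_h ha1 ha2).const_mul _)
        ((int_c ha1 ha2).const_mul _),
      MeasureTheory.integral_const_mul, MeasureTheory.integral_const_mul] at this
  have eC : C = Gamma (a+1) * Gamma (1-2*a) / Gamma (2-a) := int_c_val ha1 ha2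
  have e2 : (∫ s in (0:ℝ)..1, s ^ (2 * H - 1)) = 1/(1+2*a) := by
    rw [integral_rpow (Or.inl (by linarith : (-1:ℝ) < 2*H - 1)),
      show 2*H-1+1 = 2*H by ring, Real.one_rpow, Real.zero_rpow (by linarith : 2*H ≠ 0)]
    rw [show 2*H = 1+2*a by rw [ha]; ring]
    norm_num
  have hGa : Gamma (2-a) = (1-a) * Gamma (1-a) := by
    rw [show (2:ℝ)-a = (1-a)+1 by ring, Real.Gamma_add_one (by linarith : (1:ℝ)-a ≠ 0)]
  have hg1 : 0 < Gamma (1-a) := Gamma_pos_of_pos (by linarith)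
  have key : (1+2*a) * I = (1-a) * C - 1 := by linarith [eA, eB]
  rw [eC, hGa] at key
  have hsimp : (1-a) * (Gamma (a+1) * Gamma (1-2*a) / ((1-a) * Gamma (1-a)))
      = Gamma (a+1) * Gamma (1-2*a) / Gamma (1-a) := by
    have h1a : (1:ℝ)-a ≠ 0 := by linarith
    field_simp
  rw [hsimp] at key
  rw [e2, show (1/2+H : ℝ) = a+1 by rw [ha]; ring,
    show (2-2*H : ℝ) = 1-2*a by rw [ha]; ring,
    show (3/2-H : ℝ) = 1-a by rw [ha]; ring,
    show (2*H : ℝ) = 1+2*a by rw [ha]; ring]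
  have hIval : I = (Gamma (a+1) * Gamma (1-2*a) / Gamma (1-a) - 1) / (1+2*a) := by
    rw [eq_div_iff h12a.ne']
    linarith [key]
  rw [hIval]
  field_simp
  ring
end

section
/- For all z > 0, ∫₀^∞ arctan(q z)/(q(1+q²)²) dq = (π/4)·(2 log(1+z) − z/(1+z)). -/
open MeasureTheory Real Set Filter Topology Function


lemma int_bound (t q : ℝ) : ‖((1+t^2*q^2)*(1+q^2)^2)⁻¹‖ ≤ (1+q^2)⁻¹ := by
  rw [Real.norm_eq_abs, abs_of_nonneg (by positivity)]
  apply inv_anti₀ (by positivity)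
  nlinarith [sq_nonneg (t*q), sq_nonneg q, sq_nonneg (q*q)]

lemma integrableOn_f (t : ℝ) : IntegrableOn (fun q => ((1+t^2*q^2)*(1+q^2)^2)⁻¹) (Ioi (0:ℝ)) := by
  apply Integrable.mono' integrable_inv_one_add_sq.restrict
  · exact (Continuous.inv₀ (by continuity) (fun q => by positivity)).aestronglyMeasurable
  · exact ae_of_all _ fun q => int_bound t q

lemma lemA (t : ℝ) (ht : 0 < t) (ht1 : t ≠ 1) :
    ∫ q in Ioi (0:ℝ), ((1+t^2*q^2)*(1+q^2)^2)⁻¹ = π*(2*t+1)/(4*(1+t)^2) := by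
  have htsq : t^2 - 1 ≠ 0 := by
    intro h
    have h' : (t-1)*(t+1) = 0 := by linear_combination h
    rcases mul_eq_zero.1 h' with h'' | h''
    · exact ht1 (by linarith)
    · linarith
  set A : ℝ := t^4/(t^2-1)^2 with hA
  set B : ℝ := -t^2/(t^2-1)^2 with hB
  set C : ℝ := 1/(1-t^2) with hC
  set F : ℝ → ℝ := fun q => A/t * arctan (t*q) + B * arctan q + C * (q/(2*(1+q^2)) + arctan q / 2) with hF
  have hderiv : ∀ q ∈ Ioi (0:ℝ), HasDerivAt F (((1+t^2*q^2)*(1+q^2)^2)⁻¹) q := by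
    intro q _
    have h1 : HasDerivAt (fun q : ℝ => arctan (t*q)) (1/(1+(t*q)^2) * t) q :=
      (Real.hasDerivAt_arctan (t*q)).comp q (by simpa using (hasDerivAt_id q).const_mul t)
    have h2 : HasDerivAt arctan (1/(1+q^2)) q := Real.hasDerivAt_arctan q
    have hd : HasDerivAt (fun q : ℝ => 2*(1+q^2)) (2*(2*q)) q := by
      have := ((hasDerivAt_pow 2 q).const_add 1).const_mul 2
      simpa [mul_assoc] using this
    have h3 : HasDerivAt (fun q : ℝ => q/(2*(1+q^2)))
        ((1*(2*(1+q^2)) - q*(2*(2*q)))/(2*(1+q^2))^2) q :=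
      (hasDerivAt_id q).div hd (by positivity)
    have hsum := ((h1.const_mul (A/t)).add (h2.const_mul B)).add
      ((h3.add (h2.div_const 2)).const_mul C)
    refine hsum.congr_deriv ?_
    have h4 : (1+(t*q)^2) ≠ 0 := by positivity
    have h4' : (1+t^2*q^2) ≠ 0 := by positivity
    have h5 : (1+q^2) ≠ 0 := by positivity
    have h8 : t ≠ 0 := ne_of_gt ht
    have h9 : 1 - t^2 ≠ 0 := fun h => htsq (by linarith)
    rw [hA, hB, hC]
    field_simp
    ring
  have hcont : ContinuousWithinAt F (Ici 0) 0 := by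
    have c1 : Continuous fun q:ℝ => arctan (t*q) :=
      Real.continuous_arctan.comp (continuous_const.mul continuous_id)
    have c2 : Continuous fun q:ℝ => q/(2*(1+q^2)) :=
      continuous_id.div (by continuity) (fun q => by positivity)
    exact (((continuous_const.mul c1).add (continuous_const.mul Real.continuous_arctan)).add
      (continuous_const.mul (c2.add (Real.continuous_arctan.div_const 2)))).continuousWithinAt
  have htend : Tendsto F atTop (𝓝 (A/t * (π/2) + B * (π/2) + C * (0 + π/2/2))) := by
    have harct : Tendsto arctan atTop (𝓝 (π/2)) :=
      tendsto_arctan_atTop.mono_right nhdsWithin_le_nhds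
    have h1 : Tendsto (fun q : ℝ => arctan (t*q)) atTop (𝓝 (π/2)) :=
      harct.comp (Tendsto.const_mul_atTop ht tendsto_id)
    have h3 : Tendsto (fun q : ℝ => q/(2*(1+q^2))) atTop (𝓝 0) := by
      have hto : Tendsto (fun q : ℝ => 2*(1+q^2)/q) atTop atTop := by
        have h2q : Tendsto (fun q : ℝ => 2/q + 2*q) atTop atTop :=
          Filter.Tendsto.add_atTop (Tendsto.div_atTop tendsto_const_nhds tendsto_id)
            (tendsto_id.const_mul_atTop two_pos)
        apply h2q.congr'
        filter_upwards [eventually_gt_atTop (0:ℝ)] with q hq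
        field_simp
      exact hto.inv_tendsto_atTop.congr (fun q => by rw [Pi.inv_apply, inv_div])
    exact ((h1.const_mul (A/t)).add (harct.const_mul B)).add
      ((h3.add (harct.div_const 2)).const_mul C)
  rw [integral_Ioi_of_hasDerivAt_of_tendsto hcont hderiv (integrableOn_f t) htend]
  have hF0 : F 0 = 0 := by simp [hF]
  rw [hF0, hA, hB, hC]
  have h6 : (1+t) ≠ 0 := by positivity
  have h7 : (1-t) ≠ 0 := fun h => ht1 (by linarith)
  have h8 : t ≠ 0 := ne_of_gt ht
  have h9 : 1 - t^2 ≠ 0 := fun h => htsq (by linarith)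
  field_simp
  ring


lemma lemB (z q : ℝ) (hz : 0 < z) (hq : 0 < q) :
    ∫ t in Ioc (0:ℝ) z, ((1+t^2*q^2)*(1+q^2)^2)⁻¹
      = Real.arctan (q*z) / (q*(1+q^2)^2) := by
  rw [← intervalIntegral.integral_of_le hz.le]
  have hq0 : q ≠ 0 := ne_of_gt hq
  have key : ∀ t : ℝ, HasDerivAt (fun t => arctan (q*t) / (q*(1+q^2)^2))
      (((1+t^2*q^2)*(1+q^2)^2)⁻¹) t := by
    intro t
    have h1 : HasDerivAt (fun t : ℝ => arctan (q*t)) (1/(1+(q*t)^2) * q) t :=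
      (Real.hasDerivAt_arctan (q*t)).comp t (by simpa using (hasDerivAt_id t).const_mul q)
    have := h1.div_const (q*(1+q^2)^2)
    refine this.congr_deriv ?_
    have h2 : (1+(q*t)^2) ≠ 0 := by positivity
    have h3 : (1+t^2*q^2) ≠ 0 := by positivity
    have h4 : (1+q^2) ≠ 0 := by positivity
    field_simp
  rw [intervalIntegral.integral_eq_sub_of_hasDerivAt (fun t _ => key t)
    ((Continuous.inv₀ (by continuity) (fun t => by positivity)).intervalIntegrable 0 z)]
  simp

lemma lemC (z : ℝ) (hz : 0 < z) :
    ∫ t in Ioc (0:ℝ) z, π*(2*t+1)/(4*(1+t)^2)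
      = (π / 4) * (2 * Real.log (1 + z) - z / (1 + z)) := by
  rw [← intervalIntegral.integral_of_le hz.le]
  have key : ∀ t ∈ Set.uIcc (0:ℝ) z, HasDerivAt (fun t => π/4 * (2*Real.log (1+t) + (1+t)⁻¹))
      (π*(2*t+1)/(4*(1+t)^2)) t := by
    intro t ht
    rw [Set.uIcc_of_le hz.le] at ht
    have h1t : (1:ℝ)+t ≠ 0 := by have := ht.1; positivity
    have h1 : HasDerivAt (fun t : ℝ => 1+t) 1 t := by simpa using (hasDerivAt_id t).const_add 1
    have h2 : HasDerivAt (fun t : ℝ => Real.log (1+t)) (1/(1+t)) t := by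
      exact ((Real.hasDerivAt_log h1t).comp t h1).congr_deriv (by simp)
    have h3 : HasDerivAt (fun t : ℝ => (1+t)⁻¹) (-1/(1+t)^2) t := by
      exact h1.inv h1t
    have := ((h2.const_mul 2).add h3).const_mul (π/4)
    refine this.congr_deriv ?_
    field_simp
    ring
  rw [intervalIntegral.integral_eq_sub_of_hasDerivAt key
    (by apply ContinuousOn.intervalIntegrable
        apply ContinuousOn.div (by fun_prop) (by fun_prop)
        intro t ht
        rw [Set.uIcc_of_le hz.le] at ht
        have := ht.1
        positivity)]
  have h1z : (1:ℝ)+z ≠ 0 := by positivity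
  field_simp [Real.log_one]
  simp only [add_zero, Real.log_one]
  ring

/-- `∫₀^∞ arctan(qz)/(q(1+q²)²) dq = (π/4)(2 log(1+z) − z/(1+z))` for `z > 0`. -/
theorem integral_arctan_div (z : ℝ) (hz : 0 < z) :
    ∫ q in Set.Ioi (0:ℝ), Real.arctan (q * z) / (q * (1 + q ^ 2) ^ 2)
      = (π / 4) * (2 * Real.log (1 + z) - z / (1 + z)) := by
  set f : ℝ → ℝ → ℝ := fun q t => ((1+t^2*q^2)*(1+q^2)^2)⁻¹ with hf
  have hcont : Continuous (uncurry f) := by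
    apply Continuous.inv₀ (by continuity) (fun p => by positivity)
  have hint : Integrable (uncurry f)
      ((volume.restrict (Ioi (0:ℝ))).prod (volume.restrict (Ioc (0:ℝ) z))) := by
    rw [integrable_prod_iff hcont.aestronglyMeasurable]
    constructor
    · exact ae_of_all _ fun q =>
        (Continuous.inv₀ (by continuity) (fun t => by positivity)).integrableOn_Ioc
    · apply Integrable.mono' ((integrable_inv_one_add_sq.restrict).mul_const z)
      · exact hcont.aestronglyMeasurable.norm.integral_prod_right'
      · refine ae_of_all _ fun q => ?_
        rw [Real.norm_eq_abs, abs_of_nonneg (by positivity)]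
        have h := norm_setIntegral_le_of_norm_le_const (μ := volume) (s := Ioc (0:ℝ) z)
          (f := fun t => ‖f q t‖) (C := (1+q^2)⁻¹)
          (by rw [Real.volume_Ioc]; exact ENNReal.ofReal_lt_top)
          (fun t _ => by rw [norm_norm]; exact int_bound t q)
        rw [Real.volume_real_Ioc_of_le hz.le, sub_zero] at h
        exact (le_abs_self _).trans h
  calc ∫ q in Set.Ioi (0:ℝ), Real.arctan (q * z) / (q * (1 + q ^ 2) ^ 2)
      = ∫ q in Ioi (0:ℝ), ∫ t in Ioc (0:ℝ) z, f q t :=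
        setIntegral_congr_fun measurableSet_Ioi fun q hq => (lemB z q hz hq).symm
    _ = ∫ t in Ioc (0:ℝ) z, ∫ q in Ioi (0:ℝ), f q t := integral_integral_swap hint
    _ = ∫ t in Ioc (0:ℝ) z, π*(2*t+1)/(4*(1+t)^2) := by
        apply setIntegral_congr_ae measurableSet_Ioc
        have h1 : ({1}ᶜ : Set ℝ) ∈ ae volume := compl_mem_ae_iff.2 (measure_singleton 1)
        filter_upwards [h1] with t ht hmem
        exact lemA t hmem.1 ht
    _ = (π / 4) * (2 * Real.log (1 + z) - z / (1 + z)) := lemC z hz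
end

section
/- For all z > 0, ∫₀^∞ q·arctan(q z)/(1+q²)² dq = (π/4)·z/(1+z). -/
open MeasureTheory Real Set Filter

lemma integrable_aux (z : ℝ) :
    IntegrableOn (fun q : ℝ => q * Real.arctan (q * z) / (1 + q ^ 2) ^ 2) (Ioi 0) := by
  have hmeas : AEStronglyMeasurable (fun q : ℝ => q * Real.arctan (q * z) / (1 + q ^ 2) ^ 2)
      (volume.restrict (Ioi 0)) := by
    apply Continuous.aestronglyMeasurable
    apply Continuous.div
    · exact continuous_id.mul (Real.continuous_arctan.comp (continuous_id.mul continuous_const))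
    · continuity
    · intro x; positivity
  refine Integrable.mono' (g := fun q : ℝ => (π / 2) * (1 + q ^ 2)⁻¹)
    ((integrable_inv_one_add_sq.const_mul (π / 2)).restrict) hmeas ?_
  filter_upwards [ae_restrict_mem measurableSet_Ioi] with q (hq : 0 < q)
  have h1 : (0:ℝ) < 1 + q ^ 2 := by positivity
  have h2 : |Real.arctan (q * z)| ≤ π / 2 := by
    rw [abs_le]
    constructor
    · linarith [Real.neg_pi_div_two_lt_arctan (q * z)]
    · linarith [Real.arctan_lt_pi_div_two (q * z)]
  rw [Real.norm_eq_abs, abs_div, abs_mul, abs_of_pos hq, abs_of_pos (pow_pos h1 2)]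
  rw [div_le_iff₀ (pow_pos h1 2)]
  have hq' : q ≤ 1 + q ^ 2 := by nlinarith
  calc q * |Real.arctan (q * z)| ≤ (1 + q ^ 2) * (π / 2) := by
        apply mul_le_mul hq' h2 (abs_nonneg _) (by positivity)
    _ ≤ π / 2 * (1 + q ^ 2)⁻¹ * (1 + q ^ 2) ^ 2 := by
        rw [mul_comm]
        apply le_of_eq
        field_simp

lemma integral_eq_of_antideriv (z : ℝ) (F : ℝ → ℝ)
    (hF0 : F 0 = 0)
    (hderiv : ∀ q : ℝ, 0 ≤ q → HasDerivAt F (q * Real.arctan (q * z) / (1 + q ^ 2) ^ 2) q)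
    (htop : Tendsto F atTop (nhds (π / 4 * (z / (1 + z))))) :
    ∫ q in Set.Ioi (0:ℝ), q * Real.arctan (q * z) / (1 + q ^ 2) ^ 2
      = (π / 4) * (z / (1 + z)) := by
  rw [integral_Ioi_of_hasDerivAt_of_tendsto' (fun q hq => hderiv q hq)
    (integrable_aux z) htop, hF0, sub_zero]

lemma tendsto_div_one_add_sq : Tendsto (fun q : ℝ => q / (4 * (1 + q ^ 2))) atTop (nhds 0) := by
  have heq : (fun q : ℝ => q / (4 * (1 + q ^ 2))) =ᶠ[atTop]
      fun q => q⁻¹ / (4 * ((q ^ 2)⁻¹ + 1)) := by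
    filter_upwards [eventually_gt_atTop 0] with q hq
    field_simp
  rw [tendsto_congr' heq]
  have h1 : Tendsto (fun q : ℝ => q⁻¹) atTop (nhds 0) := tendsto_inv_atTop_zero
  have h2 : Tendsto (fun q : ℝ => (q ^ 2)⁻¹) atTop (nhds 0) :=
    (tendsto_pow_atTop (two_ne_zero)).inv_tendsto_atTop
  have h3 : Tendsto (fun q : ℝ => 4 * ((q ^ 2)⁻¹ + 1)) atTop (nhds (4 * (0 + 1))) :=
    ((h2.add tendsto_const_nhds).const_mul 4)
  have : Tendsto (fun q : ℝ => q⁻¹ / (4 * ((q ^ 2)⁻¹ + 1))) atTop (nhds (0 / (4 * (0 + 1)))) :=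
    h1.div h3 (by norm_num)
  simpa using this

/-- `∫₀^∞ q·arctan(qz)/(1+q²)² dq = (π/4)·z/(1+z)` for `z > 0`. -/
theorem integral_mul_arctan (z : ℝ) (hz : 0 < z) :
    ∫ q in Set.Ioi (0:ℝ), q * Real.arctan (q * z) / (1 + q ^ 2) ^ 2
      = (π / 4) * (z / (1 + z)) := by
  have hz1 : (0:ℝ) < 1 + z := by linarith
  have harct : Tendsto Real.arctan atTop (nhds (π / 2)) :=
    tendsto_nhds_of_tendsto_nhdsWithin Real.tendsto_arctan_atTop
  have hinv : Tendsto (fun q : ℝ => 2 * (1 + q ^ 2)) atTop atTop := by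
    apply Tendsto.const_mul_atTop (by norm_num : (0:ℝ) < 2)
    exact tendsto_atTop_add_const_left _ 1 (tendsto_pow_atTop (two_ne_zero))
  have harctz : Tendsto (fun q : ℝ => Real.arctan (q * z)) atTop (nhds (π / 2)) :=
    harct.comp (tendsto_id.atTop_mul_const hz)
  rcases eq_or_ne z 1 with rfl | hne
  · -- z = 1 case
    apply integral_eq_of_antideriv 1 (fun q => -Real.arctan q / (2 * (1 + q ^ 2))
      + (1/4) * Real.arctan q + q / (4 * (1 + q ^ 2)))
    · simp
    · intro q _
      have h1 : (0:ℝ) < 1 + q ^ 2 := by positivity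
      have ha : HasDerivAt Real.arctan (1 / (1 + q ^ 2)) q := Real.hasDerivAt_arctan q
      have hd : HasDerivAt (fun q : ℝ => 2 * (1 + q ^ 2)) (2 * (2 * q)) q := by
        have := ((hasDerivAt_pow 2 q).const_add 1).const_mul 2
        simpa using this
      have hd4 : HasDerivAt (fun q : ℝ => 4 * (1 + q ^ 2)) (4 * (2 * q)) q := by
        have := ((hasDerivAt_pow 2 q).const_add 1).const_mul 4
        simpa using this
      have hterm1 : HasDerivAt (fun q : ℝ => -Real.arctan q / (2 * (1 + q ^ 2)))
          ((-(1 / (1 + q ^ 2)) * (2 * (1 + q ^ 2)) - (-Real.arctan q) * (2 * (2 * q)))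
            / (2 * (1 + q ^ 2)) ^ 2) q :=
        HasDerivAt.div ha.neg hd (by positivity)
      have hterm3 : HasDerivAt (fun q : ℝ => q / (4 * (1 + q ^ 2)))
          ((1 * (4 * (1 + q ^ 2)) - q * (4 * (2 * q))) / (4 * (1 + q ^ 2)) ^ 2) q :=
        HasDerivAt.div (hasDerivAt_id q) hd4 (by positivity)
      have hsum := (hterm1.add (ha.const_mul (1/4 : ℝ))).add hterm3
      refine hsum.congr_deriv ?_
      rw [mul_one]
      have h2 : ((2:ℝ) * (1 + q ^ 2)) ^ 2 ≠ 0 := by positivity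
      have h4 : ((4:ℝ) * (1 + q ^ 2)) ^ 2 ≠ 0 := by positivity
      field_simp
      ring
    · have t1 : Tendsto (fun q : ℝ => -Real.arctan q / (2 * (1 + q ^ 2))) atTop (nhds 0) :=
        harct.neg.div_atTop hinv
      have t2 : Tendsto (fun q : ℝ => (1/4 : ℝ) * Real.arctan q) atTop
          (nhds ((1/4) * (π / 2))) := harct.const_mul _
      have := (t1.add t2).add tendsto_div_one_add_sq
      convert this using 2
      ring
  · -- z ≠ 1
    have hz2 : (1:ℝ) - z ^ 2 ≠ 0 := by
      intro h
      have : (1 - z) * (1 + z) = 0 := by ring_nf; linarith [h]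
      rcases mul_eq_zero.mp this with h' | h'
      · exact hne (by linarith)
      · linarith
    apply integral_eq_of_antideriv z (fun q => -Real.arctan (q * z) / (2 * (1 + q ^ 2))
      + (z / (2 * (1 - z ^ 2))) * (Real.arctan q - z * Real.arctan (q * z)))
    · simp
    · intro q _
      have h1 : (0:ℝ) < 1 + q ^ 2 := by positivity
      have hqz : (0:ℝ) < 1 + (q * z) ^ 2 := by positivity
      have ha : HasDerivAt Real.arctan (1 / (1 + q ^ 2)) q := Real.hasDerivAt_arctan q
      have haz : HasDerivAt (fun q : ℝ => Real.arctan (q * z)) (1 / (1 + (q * z) ^ 2) * z) q :=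
        by have := (Real.hasDerivAt_arctan (q * z)).comp q (hasDerivAt_mul_const z); exact this
      have hd : HasDerivAt (fun q : ℝ => 2 * (1 + q ^ 2)) (2 * (2 * q)) q := by
        have := ((hasDerivAt_pow 2 q).const_add 1).const_mul 2
        simpa using this
      have hterm1 : HasDerivAt (fun q : ℝ => -Real.arctan (q * z) / (2 * (1 + q ^ 2)))
          ((-(1 / (1 + (q * z) ^ 2) * z) * (2 * (1 + q ^ 2))
            - (-Real.arctan (q * z)) * (2 * (2 * q))) / (2 * (1 + q ^ 2)) ^ 2) q :=
        HasDerivAt.div haz.neg hd (by positivity)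
      have hterm2 : HasDerivAt (fun q : ℝ => (z / (2 * (1 - z ^ 2)))
          * (Real.arctan q - z * Real.arctan (q * z)))
          ((z / (2 * (1 - z ^ 2))) * (1 / (1 + q ^ 2) - z * (1 / (1 + (q * z) ^ 2) * z))) q :=
        (ha.sub (haz.const_mul z)).const_mul _
      have hsum := hterm1.add hterm2
      refine hsum.congr_deriv ?_
      have h2 : ((2:ℝ) * (1 + q ^ 2)) ^ 2 ≠ 0 := by positivity
      field_simp
      ring
    · have t1 : Tendsto (fun q : ℝ => -Real.arctan (q * z) / (2 * (1 + q ^ 2))) atTop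
          (nhds 0) := harctz.neg.div_atTop hinv
      have t2 : Tendsto (fun q : ℝ => (z / (2 * (1 - z ^ 2)))
          * (Real.arctan q - z * Real.arctan (q * z))) atTop
          (nhds ((z / (2 * (1 - z ^ 2))) * (π / 2 - z * (π / 2)))) :=
        (harct.sub (harctz.const_mul z)).const_mul _
      have := t1.add t2
      convert this using 2
      field_simp
      ring
end

section
/- Let B_H be fractional Brownian motion, i.e., the centered Gaussian process with covariance (|s|^{2H}+|t|^{2H}−|s−t|^{2H})/2. For 0 < H₁ < H₂ ≤ 1 and all s, t ≥ 0, Cov(B_{H₂}(s), B_{H₂}(t)) ≥ Cov(B_{H₁}(s^{H₂/H₁}), B_{H₁}(t^{H₂/H₁})), and Var(B_{H₂}(t)) = Var(B_{H₁}(t^{H₂/H₁})). -/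
open Real NNReal

/-- The covariance function of fractional Brownian motion with Hurst parameter `H`. -/
noncomputable def fbmCov (H s t : ℝ) : ℝ :=
  (|s| ^ (2 * H) + |t| ^ (2 * H) - |s - t| ^ (2 * H)) / 2

lemma key_aux {a s t : ℝ} (ha : 1 ≤ a) (ht : 0 ≤ t) (hts : t ≤ s) :
    (s - t) ^ a ≤ s ^ a - t ^ a := by
  have hst : 0 ≤ s - t := sub_nonneg.mpr hts
  have := NNReal.add_rpow_le_rpow_add (⟨s - t, hst⟩ : ℝ≥0) (⟨t, ht⟩ : ℝ≥0) ha
  have h2 : ((⟨s - t, hst⟩ : ℝ≥0) + (⟨t, ht⟩ : ℝ≥0)) = (⟨s, ht.trans hts⟩ : ℝ≥0) := by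
    ext
    push_cast
    ring
  erw [h2] at this
  have := (NNReal.coe_le_coe.mpr this)
  replace this : (s - t) ^ a + t ^ a ≤ s ^ a := this
  linarith

/-- For `0 < H₁ < H₂ ≤ 1` and `s, t ≥ 0`:
`Cov(B_{H₂}(s), B_{H₂}(t)) ≥ Cov(B_{H₁}(s^{H₂/H₁}), B_{H₁}(t^{H₂/H₁}))` and
`Var(B_{H₂}(t)) = Var(B_{H₁}(t^{H₂/H₁}))`. -/
theorem fbmCov_time_change (H₁ H₂ : ℝ) (h1 : 0 < H₁) (h12 : H₁ < H₂) (h2 : H₂ ≤ 1)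
    (s t : ℝ) (hs : 0 ≤ s) (ht : 0 ≤ t) :
    fbmCov H₁ (s ^ (H₂ / H₁)) (t ^ (H₂ / H₁)) ≤ fbmCov H₂ s t ∧
    fbmCov H₂ t t = fbmCov H₁ (t ^ (H₂ / H₁)) (t ^ (H₂ / H₁)) := by
  set a := H₂ / H₁ with hadef
  have ha : 1 ≤ a := (one_le_div h1).mpr h12.le
  have hvar : ∀ u : ℝ, 0 ≤ u → (u ^ a) ^ (2 * H₁) = u ^ (2 * H₂) := by
    intro u hu
    rw [← Real.rpow_mul hu]
    congr 1
    field_simp [hadef]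
    rw [hadef]; field_simp
  -- key inequality |s - t|^(2H₂) ≤ |s^a - t^a|^(2H₁)
  have key : ∀ u v : ℝ, 0 ≤ v → v ≤ u →
      |u - v| ^ (2 * H₂) ≤ |u ^ a - v ^ a| ^ (2 * H₁) := by
    intro u v hv hvu
    have huv : 0 ≤ u - v := sub_nonneg.mpr hvu
    have hmono : v ^ a ≤ u ^ a := Real.rpow_le_rpow hv hvu (by linarith)
    rw [abs_of_nonneg huv, abs_of_nonneg (sub_nonneg.mpr hmono)]
    have h1' : (u - v) ^ (2 * H₂) = ((u - v) ^ a) ^ (2 * H₁) := (hvar _ huv).symm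
    rw [h1']
    exact Real.rpow_le_rpow (Real.rpow_nonneg huv a) (key_aux ha hv hvu) (by linarith)
  have habs : ∀ u : ℝ, 0 ≤ u → |u ^ a| ^ (2 * H₁) = u ^ (2 * H₂) := fun u hu => by
    rw [abs_of_nonneg (Real.rpow_nonneg hu a), hvar u hu]
  constructor
  · unfold fbmCov
    rw [habs s hs, habs t ht, abs_of_nonneg hs, abs_of_nonneg ht]
    have : |s - t| ^ (2 * H₂) ≤ |s ^ a - t ^ a| ^ (2 * H₁) := by
      rcases le_total t s with h | h
      · exact key s t ht h
      · rw [abs_sub_comm, abs_sub_comm (s ^ a)]; exact key t s hs h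
    linarith
  · unfold fbmCov
    rw [habs t ht, abs_of_nonneg ht]
    simp only [sub_self, abs_zero]
    rw [Real.zero_rpow (by linarith), Real.zero_rpow (by linarith)]
end

section
/- The function p(t,y) = √2·a·y·e^{−(y+ta)²/(2t)}/(√π·t^{3/2}) satisfies ∫₀^∞∫₀^∞ p(t,y) dy dt = 1 for every a > 0. -/
open MeasureTheory Real Set Filter Topology

noncomputable def gPhi (x : ℝ) : ℝ := ∫ v in Set.Ioi x, Real.exp (-(1/2) * v ^ 2)

lemma gauss_integrable : Integrable (fun v : ℝ => Real.exp (-(1/2) * v ^ 2)) :=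
  integrable_exp_neg_mul_sq (by norm_num)

lemma gPhi_split {x y : ℝ} (hxy : x ≤ y) :
    gPhi x = (∫ v in x..y, Real.exp (-(1/2) * v ^ 2)) + gPhi y := by
  rw [intervalIntegral.integral_of_le hxy, gPhi, gPhi, ← Set.Ioc_union_Ioi_eq_Ioi hxy,
    setIntegral_union (Set.Ioc_disjoint_Ioi le_rfl) measurableSet_Ioi
      gauss_integrable.integrableOn gauss_integrable.integrableOn]

lemma gPhi_eq (y : ℝ) : gPhi y = gPhi 0 - ∫ v in (0:ℝ)..y, Real.exp (-(1/2) * v ^ 2) := by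
  rcases le_total 0 y with h | h
  · rw [gPhi_split h]; ring
  · rw [gPhi_split h, intervalIntegral.integral_symm]; ring

lemma hasDerivAt_gPhi (x : ℝ) : HasDerivAt gPhi (-Real.exp (-(1/2) * x ^ 2)) x := by
  have hc : Continuous (fun v : ℝ => Real.exp (-(1/2) * v ^ 2)) := by continuity
  have h : HasDerivAt (fun y => ∫ v in (0:ℝ)..y, Real.exp (-(1/2) * v ^ 2))
      (Real.exp (-(1/2) * x ^ 2)) x :=
    intervalIntegral.integral_hasDerivAt_right
      (gauss_integrable.intervalIntegrable)
      (hc.stronglyMeasurableAtFilter _ _) hc.continuousAt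
  have h2 : HasDerivAt (fun y => gPhi 0 - ∫ v in (0:ℝ)..y, Real.exp (-(1/2) * v ^ 2))
      (0 - Real.exp (-(1/2) * x ^ 2)) x := (hasDerivAt_const x (gPhi 0)).sub h
  have hfe : (fun y => gPhi 0 - ∫ v in (0:ℝ)..y, Real.exp (-(1/2) * v ^ 2)) = gPhi :=
    funext fun y => (gPhi_eq y).symm
  rw [hfe] at h2
  simpa using h2

lemma continuous_gPhi : Continuous gPhi :=
  continuous_iff_continuousAt.mpr fun x => (hasDerivAt_gPhi x).continuousAt

lemma gPhi_nonneg (x : ℝ) : 0 ≤ gPhi x :=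
  setIntegral_nonneg measurableSet_Ioi fun v _ => (Real.exp_pos _).le

lemma integral_mul_exp_Ioi {b : ℝ} (hb : 0 < b) (c : ℝ) :
    ∫ r in Set.Ioi c, r * Real.exp (-b * r ^ 2) = Real.exp (-b * c ^ 2) / (2 * b) := by
  have hderiv : ∀ x ∈ Set.Ioi c,
      HasDerivAt (fun x => -(Real.exp (-b * x ^ 2) / (2 * b))) (x * Real.exp (-b * x ^ 2)) x := by
    intro x _
    have h1 : HasDerivAt (fun x : ℝ => -b * x ^ 2) (-b * (2 * x)) x := by
      simpa using ((hasDerivAt_pow 2 x).const_mul (-b))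
    have h2 := (h1.exp.div_const (2 * b)).neg
    refine h2.congr_deriv ?_
    have hb2 : (2 * b) ≠ 0 := by positivity
    rw [neg_eq_iff_eq_neg, div_eq_iff hb2]
    ring
  have htop : Tendsto (fun x => -(Real.exp (-b * x ^ 2) / (2 * b))) atTop (𝓝 0) := by
    have h1 : Tendsto (fun x : ℝ => -b * x ^ 2) atTop atBot := by
      rw [show (fun x : ℝ => -b * x ^ 2) = (fun x : ℝ => -(b * x ^ 2)) from funext fun x => by ring]
      exact tendsto_neg_atTop_atBot.comp
        ((tendsto_pow_atTop (two_ne_zero)).const_mul_atTop hb)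
    have := ((Real.tendsto_exp_atBot.comp h1).div_const (2 * b)).neg
    simpa using this
  have hint : IntegrableOn (fun r : ℝ => r * Real.exp (-b * r ^ 2)) (Set.Ioi c) :=
    (integrable_mul_exp_neg_mul_sq hb).integrableOn
  have hcont : ContinuousWithinAt (fun x => -(Real.exp (-b * x ^ 2) / (2 * b))) (Set.Ici c) c := by
    apply Continuous.continuousWithinAt
    continuity
  have := integral_Ioi_of_hasDerivAt_of_tendsto hcont hderiv hint htop
  rw [this]
  ring

lemma gPhi_le {x : ℝ} (hx : 0 < x) : gPhi x ≤ Real.exp (-(1/2) * x ^ 2) / x := by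
  have h1 : gPhi x ≤ ∫ v in Set.Ioi x, (v * Real.exp (-(1/2) * v ^ 2)) * x⁻¹ := by
    apply setIntegral_mono_on gauss_integrable.integrableOn
      (((integrable_mul_exp_neg_mul_sq (by norm_num : (0:ℝ) < 1/2)).mul_const _).integrableOn)
      measurableSet_Ioi
    intro v hv
    have hvx : x ≤ v := (mem_Ioi.mp hv).le
    have h2 : 1 ≤ v * x⁻¹ := by
      rw [← div_eq_mul_inv]
      exact (one_le_div hx).mpr hvx
    calc Real.exp (-(1/2) * v ^ 2) = 1 * Real.exp (-(1/2) * v ^ 2) := (one_mul _).symm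
      _ ≤ (v * x⁻¹) * Real.exp (-(1/2) * v ^ 2) :=
        mul_le_mul_of_nonneg_right h2 (Real.exp_pos _).le
      _ = (v * Real.exp (-(1/2) * v ^ 2)) * x⁻¹ := by ring
  rw [integral_mul_const, integral_mul_exp_Ioi (by norm_num : (0:ℝ) < 1/2) x] at h1
  calc gPhi x ≤ Real.exp (-(1/2) * x ^ 2) / (2 * (1/2)) * x⁻¹ := h1
    _ = Real.exp (-(1/2) * x ^ 2) / x := by
        rw [show (2 * (1/2 : ℝ)) = 1 by norm_num, div_one, ← div_eq_mul_inv]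


lemma inner_eq {a t : ℝ} (ha : 0 < a) (ht : 0 < t) :
    (∫ y in Set.Ioi (0:ℝ), Real.sqrt 2 * a * y * Real.exp (-(y + t * a) ^ 2 / (2 * t))
          / (Real.sqrt π * t ^ ((3:ℝ)/2)))
    = (Real.sqrt 2 * a / Real.sqrt π) *
        (Real.exp (-(a ^ 2 * t / 2)) / Real.sqrt t - a * gPhi (a * Real.sqrt t)) := by
  have hs : 0 < Real.sqrt t := Real.sqrt_pos.mpr ht
  have hst : Real.sqrt t * Real.sqrt t = t := Real.mul_self_sqrt ht.le
  set b : ℝ := (2 * t)⁻¹ with hb_def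
  have hb : 0 < b := inv_pos.mpr (by linarith)
  set c : ℝ := t * a with hc_def
  set g : ℝ → ℝ := fun u => (u - c) * Real.exp (-b * u ^ 2) with hg_def
  -- step 1: pull out constants
  have step1 : (∫ y in Set.Ioi (0:ℝ), Real.sqrt 2 * a * y * Real.exp (-(y + t * a) ^ 2 / (2 * t))
          / (Real.sqrt π * t ^ ((3:ℝ)/2)))
      = (Real.sqrt 2 * a / (Real.sqrt π * t ^ ((3:ℝ)/2))) * ∫ y in Set.Ioi (0:ℝ), g (y + c) := by
    rw [← integral_const_mul]
    apply setIntegral_congr_fun measurableSet_Ioi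
    intro y _
    have h1 : y + c - c = y := by ring
    have h2 : -b * (y + c) ^ 2 = -(y + t * a) ^ 2 / (2 * t) := by
      rw [hb_def, hc_def]; ring
    simp only [hg_def, h1, h2]
    ring
  -- step 2: translation invariance
  have step2 : (∫ y in Set.Ioi (0:ℝ), g (y + c)) = ∫ u in Set.Ioi c, g u := by
    rw [← integral_indicator measurableSet_Ioi, ← integral_indicator measurableSet_Ioi,
      ← integral_add_right_eq_self (Set.indicator (Set.Ioi c) g) c]
    congr 1
    funext y
    by_cases hy : 0 < y
    · rw [Set.indicator_of_mem (Set.mem_Ioi.mpr hy),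
        Set.indicator_of_mem (show y + c ∈ Set.Ioi c from Set.mem_Ioi.mpr (by linarith))]
    · have hy' : y ≤ 0 := not_lt.mp hy
      rw [Set.indicator_of_notMem (by simpa using hy),
        Set.indicator_of_notMem (show y + c ∉ Set.Ioi c by
          simp only [Set.mem_Ioi, not_lt]; linarith)]
  -- step 3: split the integral
  have hint1 : IntegrableOn (fun u : ℝ => u * Real.exp (-b * u ^ 2)) (Set.Ioi c) :=
    (integrable_mul_exp_neg_mul_sq hb).integrableOn
  have hint2 : IntegrableOn (fun u : ℝ => Real.exp (-b * u ^ 2)) (Set.Ioi c) :=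
    (integrable_exp_neg_mul_sq hb).integrableOn
  have step3 : (∫ u in Set.Ioi c, g u)
      = (∫ u in Set.Ioi c, u * Real.exp (-b * u ^ 2))
        - c * ∫ u in Set.Ioi c, Real.exp (-b * u ^ 2) := by
    rw [← integral_const_mul, ← integral_sub hint1 (hint2.const_mul c)]
    apply setIntegral_congr_fun measurableSet_Ioi
    intro u _
    simp only [hg_def]
    ring
  -- step 4: evaluate the two integrals
  have step4a : (∫ u in Set.Ioi c, u * Real.exp (-b * u ^ 2)) = t * Real.exp (-(a ^ 2 * t / 2)) := by
    rw [integral_mul_exp_Ioi hb c]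
    have h1 : -b * c ^ 2 = -(a ^ 2 * t / 2) := by
      rw [hb_def, hc_def]; field_simp
    rw [h1]
    have h2 : 2 * b = t⁻¹ := by rw [hb_def]; field_simp
    rw [h2]
    field_simp
  have step4b : (∫ u in Set.Ioi c, Real.exp (-b * u ^ 2))
      = Real.sqrt t * gPhi (a * Real.sqrt t) := by
    have hscale := integral_comp_mul_left_Ioi (fun v => Real.exp (-(1/2) * v ^ 2)) c
      (inv_pos.mpr hs)
    have harg : (Real.sqrt t)⁻¹ * c = a * Real.sqrt t := by
      rw [hc_def]; field_simp; linear_combination (-1) * Real.sq_sqrt ht.le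
    rw [harg] at hscale
    have hfun : ∀ u ∈ Set.Ioi c, Real.exp (-b * u ^ 2)
        = Real.exp (-(1/2) * ((Real.sqrt t)⁻¹ * u) ^ 2) := by
      intro u _
      congr 1
      rw [hb_def, ← hst]
      field_simp
      rw [Real.sqrt_sq hs.le]; ring
    rw [setIntegral_congr_fun measurableSet_Ioi hfun, hscale, inv_inv, smul_eq_mul, gPhi]
  -- assemble
  rw [step1, step2, step3, step4a, step4b]
  have h32 : t ^ ((3:ℝ)/2) = t * Real.sqrt t := by
    rw [show (3:ℝ)/2 = 1 + 1/2 by norm_num, Real.rpow_add ht, Real.rpow_one,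
      ← Real.sqrt_eq_rpow]
  rw [h32, hc_def]
  have hπ : Real.sqrt π ≠ 0 := ne_of_gt (Real.sqrt_pos.mpr Real.pi_pos)
  field_simp

noncomputable def Fint (a t : ℝ) : ℝ :=
  (-(a * t) - 1 / a) * gPhi (a * Real.sqrt t) + Real.sqrt t * Real.exp (-(a ^ 2 * t / 2))

noncomputable def Fd (a t : ℝ) : ℝ :=
  Real.exp (-(a ^ 2 * t / 2)) / Real.sqrt t - a * gPhi (a * Real.sqrt t)

lemma hasDerivAt_Fint {a t : ℝ} (ha : 0 < a) (ht : 0 < t) :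
    HasDerivAt (Fint a) (Fd a t) t := by
  have hs : 0 < Real.sqrt t := Real.sqrt_pos.mpr ht
  have hsq : Real.sqrt t ^ 2 = t := Real.sq_sqrt ht.le
  have hsqrt : HasDerivAt Real.sqrt (1 / (2 * Real.sqrt t)) t := Real.hasDerivAt_sqrt ht.ne'
  have hin : HasDerivAt (fun t => a * Real.sqrt t) (a * (1 / (2 * Real.sqrt t))) t :=
    hsqrt.const_mul a
  have hg : HasDerivAt (fun t => gPhi (a * Real.sqrt t))
      (-Real.exp (-(1/2) * (a * Real.sqrt t) ^ 2) * (a * (1 / (2 * Real.sqrt t)))) t :=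
    by have := (hasDerivAt_gPhi (a * Real.sqrt t)).comp t hin; exact this
  have hexparg : -(1/2) * (a * Real.sqrt t) ^ 2 = -(a ^ 2 * t / 2) := by
    rw [mul_pow, hsq]; ring
  rw [hexparg] at hg
  have h1 : HasDerivAt (fun t : ℝ => -(a * t) - 1 / a) (-a) t := by
    simpa using (((hasDerivAt_id t).const_mul a).neg.sub_const (1 / a))
  have hlin : HasDerivAt (fun t : ℝ => -(a ^ 2 * t / 2)) (-(a ^ 2 / 2)) t := by
    have := (((hasDerivAt_id t).const_mul (a ^ 2)).div_const 2).neg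
    simp only [mul_one] at this
    exact this
  have hexp : HasDerivAt (fun t : ℝ => Real.exp (-(a ^ 2 * t / 2)))
      (Real.exp (-(a ^ 2 * t / 2)) * (-(a ^ 2 / 2))) t := hlin.exp
  have h2 := hsqrt.mul hexp
  have htot := (h1.mul hg).add h2
  have : HasDerivAt (Fint a) ((-a) * gPhi (a * Real.sqrt t) +
      (-(a * t) - 1 / a) * (-Real.exp (-(a ^ 2 * t / 2)) * (a * (1 / (2 * Real.sqrt t)))) +
      (1 / (2 * Real.sqrt t) * Real.exp (-(a ^ 2 * t / 2)) +
        Real.sqrt t * (Real.exp (-(a ^ 2 * t / 2)) * (-(a ^ 2 / 2))))) t := htot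
  convert this using 1
  rw [Fd]
  set s := Real.sqrt t with hs_def
  rw [← hsq]
  field_simp
  ring

lemma continuous_Fint (a : ℝ) : Continuous (Fint a) := by
  unfold Fint
  apply Continuous.add
  · exact (by fun_prop : Continuous fun t : ℝ => -(a * t) - 1 / a).mul
      (continuous_gPhi.comp (by fun_prop))
  · fun_prop

lemma tendsto_Fint_atTop {a : ℝ} (ha : 0 < a) : Tendsto (Fint a) atTop (𝓝 0) := by
  set c : ℝ := a ^ 2 / 2 with hc_def
  have hc : 0 < c := by positivity
  set bound : ℝ → ℝ := fun t =>
    2 * (t ^ ((1:ℝ)/2) * Real.exp (-c * t)) + (1 / a ^ 2) * (t ^ (-(1:ℝ)/2) * Real.exp (-c * t))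
    with hbound_def
  have hb0 : Tendsto bound atTop (𝓝 0) := by
    have h1 := tendsto_rpow_mul_exp_neg_mul_atTop_nhds_zero ((1:ℝ)/2) c hc
    have h2 := tendsto_rpow_mul_exp_neg_mul_atTop_nhds_zero (-(1:ℝ)/2) c hc
    have h3 := (h1.const_mul 2).add (h2.const_mul (1 / a ^ 2))
    rw [hbound_def]
    convert h3 using 2
    norm_num
  have hFb : ∀ᶠ t in atTop, |Fint a t| ≤ bound t := by
    filter_upwards [eventually_gt_atTop 0] with t ht
    have hs : 0 < Real.sqrt t := Real.sqrt_pos.mpr ht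
    have hsq : Real.sqrt t ^ 2 = t := Real.sq_sqrt ht.le
    have hgle : gPhi (a * Real.sqrt t) ≤ Real.exp (-c * t) / (a * Real.sqrt t) := by
      have h := gPhi_le (mul_pos ha hs)
      have harg : -(1/2 : ℝ) * (a * Real.sqrt t) ^ 2 = -c * t := by
        rw [mul_pow, hsq, hc_def]; ring
      rwa [harg] at h
    have hg0 : 0 ≤ gPhi (a * Real.sqrt t) := gPhi_nonneg _
    have hexpeq : Real.exp (-(a ^ 2 * t / 2)) = Real.exp (-c * t) := by
      rw [hc_def]; ring_nf
    have habs : |Fint a t| ≤ (a * t + 1 / a) * (Real.exp (-c * t) / (a * Real.sqrt t))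
        + Real.sqrt t * Real.exp (-c * t) := by
      rw [Fint, hexpeq]
      refine (abs_add_le _ _).trans ?_
      gcongr
      · rw [abs_mul]
        have h1 : |(-(a * t) - 1 / a)| = a * t + 1 / a := by
          rw [abs_of_nonpos (by
            have h2 := mul_pos ha ht
            have h3 := one_div_pos.mpr ha
            linarith)]
          ring
        rw [h1, abs_of_nonneg hg0]
        exact mul_le_mul_of_nonneg_left hgle (by positivity)
      · rw [abs_mul, abs_of_nonneg hs.le, abs_of_nonneg (Real.exp_pos _).le]
    refine habs.trans ?_
    have hrw1 : t ^ ((1:ℝ)/2) = Real.sqrt t := (Real.sqrt_eq_rpow t).symm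
    have hrw2 : t ^ (-(1:ℝ)/2) = (Real.sqrt t)⁻¹ := by
      rw [show -(1:ℝ)/2 = -(1/2) by ring, Real.rpow_neg ht.le, Real.sqrt_eq_rpow]
    rw [hbound_def]
    simp only
    rw [hrw1, hrw2]
    have key : (a * t + 1 / a) * (Real.exp (-c * t) / (a * Real.sqrt t))
        = Real.sqrt t * Real.exp (-c * t)
          + (1 / a ^ 2) * ((Real.sqrt t)⁻¹ * Real.exp (-c * t)) := by
      simp only [neg_mul]
      field_simp
      linear_combination (-a ^ 2) * hsq
    rw [key]
    exact le_of_eq (by ring)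
  have hlow : ∀ᶠ t in atTop, -bound t ≤ Fint a t := by
    filter_upwards [hFb] with t h using (abs_le.mp h).1
  have hup : ∀ᶠ t in atTop, Fint a t ≤ bound t := by
    filter_upwards [hFb] with t h using (abs_le.mp h).2
  have hbneg : Tendsto (fun t => -bound t) atTop (𝓝 0) := by simpa using hb0.neg
  exact tendsto_of_tendsto_of_tendsto_of_le_of_le' hbneg hb0 hlow hup

lemma integrableOn_exp_div_sqrt {c : ℝ} (hc : 0 < c) :
    IntegrableOn (fun t : ℝ => Real.exp (-(c * t)) / Real.sqrt t) (Set.Ioi 0) := by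
  have hmeas : ∀ s : Set ℝ, MeasurableSet s → AEStronglyMeasurable
      (fun t : ℝ => Real.exp (-(c * t)) / Real.sqrt t) (volume.restrict s) := by
    intro s _
    exact ((Real.continuous_exp.comp (continuous_const.mul continuous_id).neg).measurable.div
      Real.continuous_sqrt.measurable).aestronglyMeasurable
  have h1 : IntegrableOn (fun t : ℝ => Real.exp (-(c * t)) / Real.sqrt t) (Set.Ioc 0 1) := by
    have hb : IntegrableOn (fun t : ℝ => t ^ (-(1:ℝ)/2)) (Set.Ioc (0:ℝ) 1) := by
      rw [← intervalIntegrable_iff_integrableOn_Ioc_of_le zero_le_one]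
      exact intervalIntegral.intervalIntegrable_rpow' (by norm_num)
    apply Integrable.mono' hb (hmeas _ measurableSet_Ioc)
    filter_upwards [ae_restrict_mem measurableSet_Ioc] with t ht
    have ht0 : 0 < t := ht.1
    have hs : 0 < Real.sqrt t := Real.sqrt_pos.mpr ht0
    rw [Real.norm_eq_abs, abs_of_nonneg (by positivity)]
    have hrw : t ^ (-(1:ℝ)/2) = (Real.sqrt t)⁻¹ := by
      rw [show -(1:ℝ)/2 = -(1/2) by ring, Real.rpow_neg ht0.le, Real.sqrt_eq_rpow]
    rw [hrw, div_eq_mul_inv]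
    have : Real.exp (-(c * t)) ≤ 1 := Real.exp_le_one_iff.mpr (by nlinarith)
    nlinarith [inv_pos.mpr hs]
  have h2 : IntegrableOn (fun t : ℝ => Real.exp (-(c * t)) / Real.sqrt t) (Set.Ioi 1) := by
    have hb : IntegrableOn (fun t : ℝ => Real.exp (-c * t)) (Set.Ioi (1:ℝ)) :=
      exp_neg_integrableOn_Ioi 1 hc
    apply Integrable.mono' hb (hmeas _ measurableSet_Ioi)
    filter_upwards [ae_restrict_mem measurableSet_Ioi] with t ht
    have ht1 : (1:ℝ) < t := ht
    have hs1 : 1 ≤ Real.sqrt t := by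
      rw [show (1:ℝ) = Real.sqrt 1 from (Real.sqrt_one).symm]
      exact Real.sqrt_le_sqrt ht1.le
    rw [Real.norm_eq_abs, abs_of_nonneg (by positivity), neg_mul]
    calc Real.exp (-(c * t)) / Real.sqrt t ≤ Real.exp (-(c * t)) / 1 := by
          apply div_le_div_of_nonneg_left (Real.exp_pos _).le one_pos hs1
      _ = Real.exp (-(c * t)) := div_one _
  have := h1.union h2
  rwa [Set.Ioc_union_Ioi_eq_Ioi zero_le_one] at this

lemma integrableOn_Fd {a : ℝ} (ha : 0 < a) : IntegrableOn (Fd a) (Set.Ioi 0) := by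
  have hc : (0:ℝ) < a ^ 2 / 2 := by positivity
  have h1 := integrableOn_exp_div_sqrt hc
  have hfe : (fun t : ℝ => Real.exp (-(a ^ 2 / 2 * t)) / Real.sqrt t)
      = fun t : ℝ => Real.exp (-(a ^ 2 * t / 2)) / Real.sqrt t := by
    funext t
    rw [show -(a ^ 2 / 2 * t) = -(a ^ 2 * t / 2) by ring]
  rw [hfe] at h1
  have h2 : IntegrableOn (fun t : ℝ => gPhi (a * Real.sqrt t)) (Set.Ioi 0) := by
    apply Integrable.mono' (h1.const_mul (1 / a))
      ((continuous_gPhi.comp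
        (continuous_const.mul Real.continuous_sqrt)).aestronglyMeasurable.restrict)
    filter_upwards [ae_restrict_mem measurableSet_Ioi] with t ht
    have ht0 : (0:ℝ) < t := ht
    have hs : 0 < Real.sqrt t := Real.sqrt_pos.mpr ht0
    have hsq : Real.sqrt t ^ 2 = t := Real.sq_sqrt ht0.le
    rw [Real.norm_eq_abs, Function.comp_apply, abs_of_nonneg (gPhi_nonneg _)]
    have hle := gPhi_le (mul_pos ha hs)
    have harg : -(1/2 : ℝ) * (a * Real.sqrt t) ^ 2 = -(a ^ 2 * t / 2) := by
      rw [mul_pow, hsq]; ring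
    rw [harg] at hle
    refine hle.trans (le_of_eq ?_)
    field_simp
  have h3 := h1.sub (h2.const_mul a)
  unfold Fd
  exact h3

lemma gPhi_zero : gPhi 0 = Real.sqrt (2 * π) / 2 := by
  rw [gPhi]
  have := integral_gaussian_Ioi (1/2)
  rw [this]
  rw [show π / (1/2 : ℝ) = 2 * π by ring]

/-- The joint density of the location and value of the all-time supremum of Brownian
motion with drift `−a` integrates to `1`:
`∫₀^∞∫₀^∞ √2·a·y·e^{−(y+ta)²/(2t)} dy dt = 1` for `a > 0`. -/
theorem sup_density_integrates_to_one (a : ℝ) (ha : 0 < a) :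
    ∫ t in Set.Ioi (0:ℝ), ∫ y in Set.Ioi (0:ℝ),
        Real.sqrt 2 * a * y * Real.exp (-(y + t * a) ^ 2 / (2 * t))
          / (Real.sqrt π * t ^ ((3:ℝ)/2)) = 1 := by
  have hcongr : ∀ t ∈ Set.Ioi (0:ℝ),
      (∫ y in Set.Ioi (0:ℝ), Real.sqrt 2 * a * y * Real.exp (-(y + t * a) ^ 2 / (2 * t))
          / (Real.sqrt π * t ^ ((3:ℝ)/2)))
      = (Real.sqrt 2 * a / Real.sqrt π) * Fd a t := fun t ht => by
    rw [inner_eq ha (Set.mem_Ioi.mp ht), Fd]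
  rw [setIntegral_congr_fun measurableSet_Ioi hcongr, integral_const_mul]
  have hFTC : ∫ t in Set.Ioi (0:ℝ), Fd a t = 0 - Fint a 0 := by
    apply integral_Ioi_of_hasDerivAt_of_tendsto
      ((continuous_Fint a).continuousWithinAt)
      (fun t ht => hasDerivAt_Fint ha (Set.mem_Ioi.mp ht))
      (integrableOn_Fd ha)
      (tendsto_Fint_atTop ha)
  rw [hFTC, Fint]
  rw [Real.sqrt_zero, mul_zero, gPhi_zero]
  have h2π : Real.sqrt (2 * π) = Real.sqrt 2 * Real.sqrt π :=
    Real.sqrt_mul (by norm_num) π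
  have hπ : (0:ℝ) < Real.sqrt π := Real.sqrt_pos.mpr Real.pi_pos
  have h2 : Real.sqrt 2 * Real.sqrt 2 = 2 := Real.mul_self_sqrt (by norm_num)
  rw [h2π]
  field_simp
  linear_combination (Real.sqrt π) * h2
end
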